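/- If f is a continuously differentiable function on I and 0 < a < b, then N̂(f,a) is contained in the interior (relative to I) of N̂(f,b), and Ň(f,a) is contained in the interior of Ň(f,b). -/

import Mathlib

open Filter Topology TopologicalSpace Set MeasureTheory

noncomputable section

/-- The unit interval `I = [0,1]` as a type. -/
abbrev UI : Type := ↥(Set.Icc (0:ℝ) 1)

/-- The space `𝒦` of closed subsets of `I`, with the (extended) Hausdorff metric topology. -/
abbrev KSp : Type := TopologicalSpace.Closeds UI

/-- The open `r`-neighbourhood of a set `A` within `I`. -/
def nbhd (A : Set UI) (r : ℝ) : Set UI := ⋃ a ∈ A, Metric.ball a r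

/-- Upper right Dini derivative `D⁺f(x)`, as an extended real. -/
def DiniSupR (f : UI → ℝ) (x : UI) : EReal :=
  Filter.limsup (fun y : UI => (((f y - f x) / ((y : ℝ) - (x : ℝ))) : EReal)) (𝓝[>] x)

/-- Lower right Dini derivative `D₊f(x)`. -/
def DiniInfR (f : UI → ℝ) (x : UI) : EReal :=
  Filter.liminf (fun y : UI => (((f y - f x) / ((y : ℝ) - (x : ℝ))) : EReal)) (𝓝[>] x)

/-- Upper left Dini derivative `D⁻f(x)`. -/
def DiniSupL (f : UI → ℝ) (x : UI) : EReal :=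
  Filter.limsup (fun y : UI => (((f y - f x) / ((y : ℝ) - (x : ℝ))) : EReal)) (𝓝[<] x)

/-- Lower left Dini derivative `D₋f(x)`. -/
def DiniInfL (f : UI → ℝ) (x : UI) : EReal :=
  Filter.liminf (fun y : UI => (((f y - f x) / ((y : ℝ) - (x : ℝ))) : EReal)) (𝓝[<] x)

/-- `x` is a knot point of `f`. -/
def IsKnotPoint (f : UI → ℝ) (x : UI) : Prop :=
  (0 < (x:ℝ) ∧ (x:ℝ) < 1 ∧ DiniSupR f x = ⊤ ∧ DiniSupL f x = ⊤ ∧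
      DiniInfR f x = ⊥ ∧ DiniInfL f x = ⊥) ∨
  ((x:ℝ) = 0 ∧ DiniSupR f x = ⊤ ∧ DiniInfR f x = ⊥) ∨
  ((x:ℝ) = 1 ∧ DiniSupL f x = ⊤ ∧ DiniInfL f x = ⊥)

/-- `N(f)`: the set of points of `I` that are not knot points of `f`. -/
def NonKnot (f : UI → ℝ) : Set UI := {x | ¬ IsKnotPoint f x}

/-- `S` is an `Fσ` subset of `I`. -/
def IsFsigma (S : Set UI) : Prop :=
  ∃ F : ℕ → Set UI, (∀ n, IsClosed (F n)) ∧ S = ⋃ n, F n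

/-- `N⁺(f,a)`. -/
def NplusUp (f : UI → ℝ) (a : ℝ) : Set UI :=
  {x | (x:ℝ) ≤ 1 - 2^(-a) ∧
    ∀ y : UI, (x:ℝ) ≤ (y:ℝ) → (y:ℝ) ≤ (x:ℝ) + 2^(-a) →
      f y - f x ≤ a * ((y:ℝ) - (x:ℝ))}

/-- `N₊(f,a)`. -/
def NplusLow (f : UI → ℝ) (a : ℝ) : Set UI :=
  {x | (x:ℝ) ≤ 1 - 2^(-a) ∧
    ∀ y : UI, (x:ℝ) ≤ (y:ℝ) → (y:ℝ) ≤ (x:ℝ) + 2^(-a) →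
      -a * ((y:ℝ) - (x:ℝ)) ≤ f y - f x}

/-- `N⁻(f,a)`. -/
def NminusUp (f : UI → ℝ) (a : ℝ) : Set UI :=
  {x | 2^(-a) ≤ (x:ℝ) ∧
    ∀ y : UI, (x:ℝ) - 2^(-a) ≤ (y:ℝ) → (y:ℝ) ≤ (x:ℝ) →
      a * ((y:ℝ) - (x:ℝ)) ≤ f y - f x}

/-- `N₋(f,a)`. -/
def NminusLow (f : UI → ℝ) (a : ℝ) : Set UI :=
  {x | 2^(-a) ≤ (x:ℝ) ∧
    ∀ y : UI, (x:ℝ) - 2^(-a) ≤ (y:ℝ) → (y:ℝ) ≤ (x:ℝ) →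
      f y - f x ≤ -a * ((y:ℝ) - (x:ℝ))}

/-- `N̂(f,a) = N⁺(f,a) ∪ N₋(f,a)`. -/
def Nhat (f : UI → ℝ) (a : ℝ) : Set UI := NplusUp f a ∪ NminusLow f a

/-- `Ň(f,a) = N₊(f,a) ∪ N⁻(f,a)`. -/
def Ncheck (f : UI → ℝ) (a : ℝ) : Set UI := NplusLow f a ∪ NminusUp f a

/-- `N(f,a)`. -/
def NN (f : UI → ℝ) (a : ℝ) : Set UI := Nhat f a ∪ Ncheck f a

/-- `f : I → ℝ` is continuously differentiable on `I`. -/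
def IsC1 (f : UI → ℝ) : Prop :=
  ContDiffOn ℝ 1 (Set.IccExtend (zero_le_one : (0:ℝ) ≤ 1) f) (Set.Icc (0:ℝ) 1)

/-- `φ` is a bump function of height `h` and width `w` located at `H1` and `H2`. -/
def IsBump (φ : C(UI, ℝ)) (h w : ℝ) (H1 H2 : Set UI) : Prop :=
  IsC1 ⇑φ ∧ ‖φ‖ = h ∧ (∀ x ∈ H1, φ x = h) ∧ (∀ x ∈ H2, φ x = -h) ∧
  {x : UI | 0 < φ x} ⊆ nbhd H1 w ∧ {x : UI | φ x < 0} ⊆ nbhd H2 w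

/-- The shifted sequence `n^k`. -/
def shiftSeq (n : ℕ → ℕ) (k : ℕ) : ℕ → ℕ := fun j => n (j + k)

/-- The index set `A_j^m(n) = [n_j] ∪ ⋃_{i=j}^{m-1} {n_i+1, …, n_i+j-1}`. -/
def Aset (n : ℕ → ℕ) (j m : ℕ) : Set ℕ :=
  Set.Icc 1 (n j) ∪ ⋃ i ∈ Set.Ico j m, Set.Icc (n i + 1) (n i + (j - 1))

/-- `n ∈ Z`: sequence of positive integers with `n_{j+1} ≥ n_j + j`. -/
def memZ (n : ℕ → ℕ) : Prop := ∀ j, 1 ≤ j → 1 ≤ n j ∧ n j + j ≤ n (j + 1)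

/-- `δ ∈ Y`: strictly decreasing sequence in `(0,1)` tending to `0`. -/
def memY (δ : ℕ → ℝ) : Prop :=
  (∀ j, 1 ≤ j → 0 < δ j ∧ δ j < 1) ∧ (∀ j, 1 ≤ j → δ (j + 1) < δ j) ∧
    Filter.Tendsto δ Filter.atTop (𝓝 0)

/-- `a ∈ X`: strictly increasing sequence of positive reals tending to `∞`. -/
def memX (a : ℕ → ℝ) : Prop :=
  (∀ j, 1 ≤ j → 0 < a j) ∧ (∀ j, 1 ≤ j → a j < a (j + 1)) ∧
    Filter.Tendsto a Filter.atTop Filter.atTop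

/-- `K ∈ 𝒮_k(n,δ)`. -/
def memS (K : ℕ → KSp) (n : ℕ → ℕ) (δ : ℕ → ℝ) (k : ℕ) : Prop :=
  ∀ j m, 2 ≤ j → j + 1 ≤ m →
    (⋃ i ∈ Aset (shiftSeq n k) j m \ Aset (shiftSeq n k) j (m - 1), (K i : Set UI))
      ⊆ ⋃ i ∈ Aset (shiftSeq n k) (j - 1) (m - 1), nbhd (K i : Set UI) (δ m)

/-- `(K, f, n, δ, a, b) ∈ 𝒴_k`. -/
def memYk (K : ℕ → KSp) (f : C(UI, ℝ)) (n : ℕ → ℕ) (δ : ℕ → ℝ) (a b : ℕ → ℝ)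
    (k : ℕ) : Prop :=
  memZ n ∧ memY δ ∧ memX a ∧ memX b ∧ memS K n δ k ∧
  ∀ j m, 1 ≤ j → j ≤ m →
    NN ⇑f (a j) ⊆ (⋃ i ∈ Aset (shiftSeq n k) j m, nbhd (K i : Set UI) (δ m)) ∧
    (⋃ i ∈ Aset n j m, (K i : Set UI)) ⊆ nbhd (NN ⇑f (b j)) (δ m)

/-- `(K, f) ∈ 𝒳`: the projection of `𝒴 = ⋃_k 𝒴_k` to `𝒦^ℕ × C(I)`. -/
def memXcal (K : ℕ → KSp) (f : C(UI, ℝ)) : Prop :=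
  ∃ n δ a b k, memYk K f n δ a b k

/-!
Since `f'` is uniformly continuous on `I`, translating a pair of points `u ≤ v` by a small `h`
changes the increment `f v - f u` by at most `(b - a) (v - u)` (mean value theorem for
`t ↦ f (t + h) - f t`). For `x ∈ N⁺(f,a)` and `x'` close to `x`, an increment of `f` from `x'`
over a length `≤ 2^(-b)` is thus compared with the increment from `x` over the same length,
which is at most `a` times that length. `N₋` is treated in the same way, and
`Ň(f,·) = N̂(-f,·)`.
-/

theorem abs_increment_translate_sub_le {F F' : ℝ → ℝ} {s : Set ℝ} (hs : s.OrdConnected)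
    (hF : ∀ t ∈ s, HasDerivWithinAt F (F' t) s t) {κ h u v : ℝ} (huv : u ≤ v)
    (hu : u ∈ s) (hv : v ∈ s) (hu' : u + h ∈ s) (hv' : v + h ∈ s)
    (hκ : ∀ t ∈ Icc u v, |F' (t + h) - F' t| ≤ κ) :
    |(F (v + h) - F (u + h)) - (F v - F u)| ≤ κ * (v - u) := by
  have hmaps : MapsTo (· + h) (Icc u v) s := fun t ht =>
    hs.out hu' hv' ⟨add_le_add_left ht.1 h, add_le_add_left ht.2 h⟩
  have hderiv : ∀ t ∈ Icc u v, HasDerivWithinAt (fun t => F (t + h) - F t)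
      (F' (t + h) - F' t) (Icc u v) t := by
    intro t ht
    have hshift : HasDerivWithinAt (fun t => F (t + h)) (F' (t + h)) (Icc u v) t := by
      simpa [Function.comp_def] using (hF (t + h) (hmaps ht)).scomp t
        ((hasDerivWithinAt_id t (Icc u v)).add_const h) hmaps
    exact hshift.sub ((hF t (hs.out hu hv ht)).mono (hs.out hu hv))
  have := norm_image_sub_le_of_norm_deriv_le_segment' hderiv
    (fun t ht => hκ t (Ico_subset_Icc_self ht)) v (right_mem_Icc.2 huv)
  simp only [Real.norm_eq_abs] at this
  convert this using 2
  ring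

theorem IsC1.exists_abs_increment_translate_sub_le {f : UI → ℝ} (hf : IsC1 f) {κ : ℝ}
    (hκ : 0 < κ) :
    ∃ η > 0, ∀ u v u' v' : UI, (u : ℝ) ≤ v → (v' : ℝ) - u' = v - u →
      |(u' : ℝ) - u| < η → |(f v' - f u') - (f v - f u)| ≤ κ * (v - u) := by
  set F := IccExtend zero_le_one f
  have hderiv :
      ∀ t ∈ Icc (0 : ℝ) 1, HasDerivWithinAt F (derivWithin F (Icc 0 1) t) (Icc 0 1) t :=
    fun t ht => ((hf.differentiableOn one_ne_zero) t ht).hasDerivWithinAt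
  have hunif : UniformContinuousOn (derivWithin F (Icc 0 1)) (Icc 0 1) :=
    isCompact_Icc.uniformContinuousOn_of_continuous
      (hf.continuousOn_derivWithin (uniqueDiffOn_Icc one_pos) le_rfl)
  obtain ⟨η, hη, hclose⟩ := Metric.uniformContinuousOn_iff.1 hunif κ hκ
  refine ⟨η, hη, fun u v u' v' huv hdisp hshift => ?_⟩
  have hu' : (u : ℝ) + (u' - u) = u' := by ring
  have hv' : (v : ℝ) + (u' - u) = v' := by linarith
  have key := abs_increment_translate_sub_le ordConnected_Icc hderiv huv u.2 v.2
    (hu' ▸ u'.2) (hv' ▸ v'.2) fun t ht => by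
      have htI : t ∈ Icc (0 : ℝ) 1 := ordConnected_Icc.out u.2 v.2 ht
      have htI' : t + (u' - u) ∈ Icc (0 : ℝ) 1 :=
        ordConnected_Icc.out u'.2 v'.2 ⟨by linarith [ht.1], by linarith [ht.2]⟩
      have := hclose _ htI' t htI (by rwa [Real.dist_eq, add_sub_cancel_left])
      exact (Real.dist_eq _ _ ▸ this).le
  rw [hu', hv'] at key
  simpa only [F, IccExtend_val] using key

theorem mem_interior_of_abs_sub_lt {S : Set UI} {x : UI} {ε : ℝ} (hε : 0 < ε)
    (h : ∀ x' : UI, |(x' : ℝ) - x| < ε → x' ∈ S) : x ∈ interior S :=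
  mem_interior_iff_mem_nhds.2 <| Metric.mem_nhds_iff.2
    ⟨ε, hε, fun x' hx' => h x' <| by
      rwa [Metric.mem_ball, Subtype.dist_eq, Real.dist_eq] at hx'⟩

section

variable {f : UI → ℝ} {a b : ℝ}

theorem IsC1.nplusUp_subset_interior (hf : IsC1 f) (hab : a < b) :
    NplusUp f a ⊆ interior (NplusUp f b) := by
  rintro x ⟨hx_le, hx⟩
  obtain ⟨η, hη, htranslate⟩ := hf.exists_abs_increment_translate_sub_le (sub_pos.2 hab)
  have hgap : (2 : ℝ) ^ (-b) < 2 ^ (-a) :=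
    Real.rpow_lt_rpow_of_exponent_lt one_lt_two (neg_lt_neg hab)
  refine mem_interior_of_abs_sub_lt (lt_min hη (sub_pos.2 hgap)) fun x' hx' => ?_
  obtain ⟨hx'η, hx'gap⟩ := lt_min_iff.1 hx'
  rw [abs_lt] at hx'gap
  refine ⟨by linarith, fun y hy₁ hy₂ => ?_⟩
  let y' : UI := ⟨y + (x - x'), by linarith [x.2.1], by linarith [x.2.2]⟩
  have hy' : f y' - f x ≤ a * (y - x') := by
    have := hx y' (by simp only [y']; linarith) (by simp only [y']; linarith)
    rwa [show (y' : ℝ) - x = y - x' by simp only [y']; ring] at this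
  have hinc := htranslate x' y x y' hy₁ (by simp only [y']; ring) (by rwa [abs_sub_comm])
  calc f y - f x' ≤ (f y' - f x) + (b - a) * (y - x') := by linarith [(abs_le.1 hinc).1]
    _ ≤ a * (y - x') + (b - a) * (y - x') := by gcongr
    _ = b * (y - x') := by ring

theorem IsC1.nminusLow_subset_interior (hf : IsC1 f) (hab : a < b) :
    NminusLow f a ⊆ interior (NminusLow f b) := by
  rintro x ⟨hx_ge, hx⟩
  obtain ⟨η, hη, htranslate⟩ := hf.exists_abs_increment_translate_sub_le (sub_pos.2 hab)
  have hgap : (2 : ℝ) ^ (-b) < 2 ^ (-a) :=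
    Real.rpow_lt_rpow_of_exponent_lt one_lt_two (neg_lt_neg hab)
  refine mem_interior_of_abs_sub_lt (lt_min hη (sub_pos.2 hgap)) fun x' hx' => ?_
  obtain ⟨hx'η, hx'gap⟩ := lt_min_iff.1 hx'
  rw [abs_lt] at hx'gap
  refine ⟨by linarith, fun y hy₁ hy₂ => ?_⟩
  let y' : UI := ⟨y + (x - x'), by linarith [x.2.1], by linarith [x.2.2]⟩
  have hy' : f y' - f x ≤ a * (x' - y) := by
    have := hx y' (by simp only [y']; linarith) (by simp only [y']; linarith)
    rwa [show -a * ((y' : ℝ) - x) = a * (x' - y) by simp only [y']; ring] at this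
  have hinc := htranslate y x' y' x hy₂ (by simp only [y']; ring)
    (by simp only [y']; rwa [add_sub_cancel_left, abs_sub_comm])
  calc f y - f x' ≤ (f y' - f x) + (b - a) * (x' - y) := by linarith [(abs_le.1 hinc).2]
    _ ≤ a * (x' - y) + (b - a) * (x' - y) := by gcongr
    _ = -b * (y - x') := by ring

theorem IsC1.nhat_subset_interior (hf : IsC1 f) (hab : a < b) :
    Nhat f a ⊆ interior (Nhat f b) :=
  union_subset
    ((hf.nplusUp_subset_interior hab).trans (interior_mono subset_union_left))
    ((hf.nminusLow_subset_interior hab).trans (interior_mono subset_union_right))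

theorem IsC1.neg (hf : IsC1 f) : IsC1 (-f) :=
  ContDiffOn.neg hf

theorem ncheck_eq_nhat_neg (f : UI → ℝ) (a : ℝ) : Ncheck f a = Nhat (-f) a := by
  have hneg : ∀ c u v : ℝ, -u - -v ≤ c ↔ -c ≤ u - v := fun _ _ _ => by
    constructor <;> intro <;> linarith
  ext x
  simp only [Ncheck, Nhat, NplusLow, NplusUp, NminusUp, NminusLow, mem_union, mem_ofPred_eq,
    Pi.neg_apply, hneg, neg_mul, neg_neg]

end

theorem N_subset_interior_of_C1_general (f : UI → ℝ) (hf : IsC1 f) (a b : ℝ)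
    (hab : a < b) :
    Nhat f a ⊆ interior (Nhat f b) ∧ Ncheck f a ⊆ interior (Ncheck f b) := by
  refine ⟨hf.nhat_subset_interior hab, ?_⟩
  rw [ncheck_eq_nhat_neg, ncheck_eq_nhat_neg]
  exact hf.neg.nhat_subset_interior hab

/-- If `f ∈ C¹(I)` and `0 < a < b`, then `N̂(f,a) ⊆ Int N̂(f,b)` and
`Ň(f,a) ⊆ Int Ň(f,b)` (interiors relative to `I`). -/
theorem N_subset_interior_of_C1 (f : UI → ℝ) (hf : IsC1 f) (a b : ℝ)
    (ha : 0 < a) (hab : a < b) :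
    Nhat f a ⊆ interior (Nhat f b) ∧ Ncheck f a ⊆ interior (Ncheck f b) :=
  N_subset_interior_of_C1_general f hf a b hab

end
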